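/- Huber-type removability: Let G ⊆ ℂ be a domain carrying a regular conformal metric with curvature ≤ -1, and let f : 𝔻' → G be holomorphic on the punctured unit disk. If there is a sequence (zₙ) ⊂ 𝔻' with zₙ → 0 such that f(zₙ) converges to a point of G, then z = 0 is a removable singularity of f. -/

import Mathlib

open Filter Set


/-- The Laplacian of `u : ℂ → ℝ` at `z`: sum of second derivatives in the
real and imaginary coordinate directions. -/
noncomputable def lap (u : ℂ → ℝ) (z : ℂ) : ℝ :=
  iteratedDeriv 2 (fun t : ℝ => u (z + (t : ℂ))) 0 +
    iteratedDeriv 2 (fun t : ℝ => u (z + (t : ℂ) * Complex.I)) 0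

lemma iteratedDeriv2_eq (g : ℝ → ℝ) : iteratedDeriv 2 g 0 = deriv (deriv g) 0 := by
  simp [iteratedDeriv_succ, iteratedDeriv_one]

lemma iteratedDeriv2_congr {g₁ g₂ : ℝ → ℝ} (h : g₁ =ᶠ[nhds 0] g₂) :
    iteratedDeriv 2 g₁ 0 = iteratedDeriv 2 g₂ 0 := by
  rw [iteratedDeriv2_eq, iteratedDeriv2_eq]
  exact (h.deriv).deriv_eq

lemma iteratedDeriv2_affine (A B : ℝ) : iteratedDeriv 2 (fun t : ℝ => A + B * t) 0 = 0 := by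
  rw [iteratedDeriv2_eq]
  have : deriv (fun t : ℝ => A + B * t) = fun _ => B := by
    funext t
    simpa using (((hasDerivAt_id t).const_mul B).const_add A).deriv
  rw [this, deriv_const]

lemma iteratedDeriv2_log_quad {A B C : ℝ} (hA : 0 < A) :
    iteratedDeriv 2 (fun t : ℝ => Real.log (A + B * t + C * t ^ 2)) 0
      = (2 * C * A - B ^ 2) / A ^ 2 := by
  have hp : Continuous fun t : ℝ => A + B * t + C * t ^ 2 := by continuity
  have hev : ∀ᶠ t in nhds (0:ℝ), 0 < A + B * t + C * t ^ 2 := by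
    have : (0:ℝ) < A + B * 0 + C * 0 ^ 2 := by simpa using hA
    exact (hp.continuousAt (x := 0)).eventually_mem (Ioi_mem_nhds (by simpa using hA))
  have hq : ∀ t : ℝ, HasDerivAt (fun t : ℝ => A + B * t + C * t ^ 2) (B + C * (2 * t)) t := by
    intro t
    have h1 : HasDerivAt (fun t : ℝ => A + B * t) B t := by
      simpa using ((hasDerivAt_id t).const_mul B).const_add A
    have h2 : HasDerivAt (fun t : ℝ => C * t ^ 2) (C * (2 * t)) t := by
      simpa using (hasDerivAt_pow 2 t).const_mul C
    exact h1.add h2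
  have h1 : deriv (fun t : ℝ => Real.log (A + B * t + C * t ^ 2))
      =ᶠ[nhds 0] fun t => (B + C * (2 * t)) / (A + B * t + C * t ^ 2) := by
    filter_upwards [hev] with t ht
    exact ((hq t).log ht.ne').deriv
  rw [iteratedDeriv2_eq, h1.deriv_eq]
  have hnum : HasDerivAt (fun t : ℝ => B + C * (2 * t)) (C * 2) 0 := by
    simpa using ((hasDerivAt_id (0:ℝ)).const_mul 2 |>.const_mul C).const_add B
  have hden : HasDerivAt (fun t : ℝ => A + B * t + C * t ^ 2) (B + C * (2 * 0)) 0 := hq 0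
  have hA0 : A + B * 0 + C * 0 ^ 2 ≠ 0 := by simpa using hA.ne'
  have h2 := hnum.div hden hA0
  rw [(show HasDerivAt (fun t : ℝ => (B + C * (2 * t)) / (A + B * t + C * t ^ 2)) _ 0 from h2).deriv]
  field_simp
  ring

lemma secondDerivTest {g : ℝ → ℝ} (hg : ContDiffAt ℝ 2 g 0) (hmax : IsLocalMax g 0) :
    iteratedDeriv 2 g 0 ≤ 0 := by
  by_contra hlt
  push_neg at hlt
  obtain ⟨U, hU, hgU⟩ := hg.contDiffOn le_rfl (by simp)
  set W := interior U with hWdef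
  have hWopen : IsOpen W := isOpen_interior
  have h0W : (0:ℝ) ∈ W := mem_interior_iff_mem_nhds.2 hU
  have hgW : ContDiffOn ℝ 2 g W := hgU.mono interior_subset
  have hd1 : ContDiffOn ℝ 1 (deriv g) W := hgW.deriv_of_isOpen hWopen (by norm_num)
  have hdg0 : HasDerivAt (deriv g) (iteratedDeriv 2 g 0) 0 := by
    have h : DifferentiableAt ℝ (deriv g) 0 :=
      (hd1.differentiableOn (by norm_num)).differentiableAt (hWopen.mem_nhds h0W)
    rw [iteratedDeriv2_eq]
    exact h.hasDerivAt
  have h0' : deriv g 0 = 0 := hmax.deriv_eq_zero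
  have hslope := hasDerivAt_iff_tendsto_slope.1 hdg0
  have hsl : ∀ᶠ t in nhds (0:ℝ), t ∈ Ioi (0:ℝ) → 0 < deriv g t := by
    have h₁ : ∀ᶠ t in nhdsWithin (0:ℝ) {(0:ℝ)}ᶜ, 0 < slope (deriv g) 0 t :=
      hslope.eventually (lt_mem_nhds hlt)
    have h₂ : ∀ᶠ t in nhdsWithin (0:ℝ) (Ioi 0), 0 < slope (deriv g) 0 t :=
      nhdsWithin_mono (0:ℝ) (fun t (ht : t ∈ Ioi (0:ℝ)) =>
        (ne_of_gt ht : t ≠ 0)) h₁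
    have h₃ : ∀ᶠ t in nhdsWithin (0:ℝ) (Ioi 0), 0 < deriv g t := by
      rw [eventually_nhdsWithin_iff] at h₂ ⊢
      filter_upwards [h₂] with t ht htpos
      have h4 : 0 < deriv g t / t := by
        simpa [slope_def_field, h0'] using ht htpos
      rcases div_pos_iff.1 h4 with ⟨h1, _⟩ | ⟨_, h2⟩
      · exact h1
      · exact absurd (htpos : (0:ℝ) < t) (not_lt.2 h2.le)
    rw [eventually_nhdsWithin_iff] at h₃
    exact h₃
  obtain ⟨ε, hε, hball⟩ := Metric.eventually_nhds_iff.1 (hsl.and ((hWopen.eventually_mem h0W).and hmax))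
  have hsub : Icc (0:ℝ) (ε/2) ⊆ Metric.ball (0:ℝ) ε := by
    intro t ht
    have : |t| < ε := by
      rw [abs_of_nonneg ht.1]
      linarith [ht.2]
    simpa [Real.dist_eq] using this
  have hmono : StrictMonoOn g (Icc (0:ℝ) (ε/2)) := by
    apply strictMonoOn_of_deriv_pos (convex_Icc _ _)
    · apply (hgW.continuousOn).mono
      intro t ht
      exact (hball (Metric.mem_ball.1 (hsub ht))).2.1
    · intro t ht
      rw [interior_Icc] at ht
      have htb : dist t 0 < ε := by
        rw [Real.dist_eq, sub_zero, abs_of_pos ht.1]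
        linarith [ht.2]
      exact (hball htb).1 ht.1
  have hin : (ε/2) ∈ Icc (0:ℝ) (ε/2) := ⟨by positivity, le_rfl⟩
  have h2 : g 0 < g (ε/2) := hmono ⟨le_rfl, by positivity⟩ hin (by positivity)
  have h3 : g (ε/2) ≤ g 0 := (hball (by
    rw [Real.dist_eq, sub_zero, abs_of_pos (by positivity)]
    linarith)).2.2
  linarith



lemma lap_def' (u : ℂ → ℝ) (z : ℂ) :
    lap u z = iteratedDeriv 2 (fun t : ℝ => u (z + (t : ℂ) * 1)) 0 +
      iteratedDeriv 2 (fun t : ℝ => u (z + (t : ℂ) * Complex.I)) 0 := by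
  simp [lap]

lemma hasDerivAt_line (z c : ℂ) (t : ℝ) :
    HasDerivAt (fun s : ℝ => z + (s : ℂ) * c) c t := by
  have h1 : HasDerivAt (fun s : ℝ => (s : ℂ)) 1 t := by
    exact Complex.ofRealCLM.hasDerivAt (x := t)
  simpa using (h1.mul_const c).const_add z

lemma lap_congr {u v : ℂ → ℝ} {z : ℂ} (h : u =ᶠ[nhds z] v) : lap u z = lap v z := by
  have key : ∀ c : ℂ, (fun t : ℝ => u (z + (t:ℂ) * c)) =ᶠ[nhds 0] fun t => v (z + (t:ℂ) * c) := by
    intro c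
    have hcont : Continuous fun t : ℝ => z + (t:ℂ) * c := by continuity
    have htend : Tendsto (fun t : ℝ => z + (t:ℂ) * c) (nhds 0) (nhds z) := by
      have := hcont.tendsto 0
      simpa using this
    exact h.comp_tendsto htend
  rw [lap_def', lap_def' v]
  rw [iteratedDeriv2_congr (key 1), iteratedDeriv2_congr (key Complex.I)]

lemma slice_contDiffAt {u : ℂ → ℝ} {z : ℂ} (hu : ContDiffAt ℝ 2 u z) (c : ℂ) :
    ContDiffAt ℝ 2 (fun t : ℝ => u (z + (t:ℂ) * c)) 0 := by
  have hline : ContDiffAt ℝ 2 (fun t : ℝ => z + (t:ℂ) * c) 0 := by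
    apply ContDiffAt.add contDiffAt_const
    exact (Complex.ofRealCLM.contDiff.of_le le_top).contDiffAt.mul contDiffAt_const
  have hu' : ContDiffAt ℝ 2 u ((fun t : ℝ => z + (t:ℂ) * c) 0) := by simpa using hu
  exact ContDiffAt.comp 0 hu' hline

lemma iteratedDeriv2_add {f g : ℝ → ℝ} (hf : ContDiffAt ℝ 2 f 0) (hg : ContDiffAt ℝ 2 g 0) :
    iteratedDeriv 2 (fun t => f t + g t) 0 = iteratedDeriv 2 f 0 + iteratedDeriv 2 g 0 := by
  obtain ⟨U, hU, hfU⟩ := hf.contDiffOn le_rfl (by simp)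
  obtain ⟨V, hV, hgV⟩ := hg.contDiffOn le_rfl (by simp)
  set W := interior U ∩ interior V with hWdef
  have hWopen : IsOpen W := isOpen_interior.inter isOpen_interior
  have h0W : (0:ℝ) ∈ W :=
    ⟨mem_interior_iff_mem_nhds.2 hU, mem_interior_iff_mem_nhds.2 hV⟩
  have hfW : ContDiffOn ℝ 2 f W := hfU.mono (inter_subset_left.trans interior_subset)
  have hgW : ContDiffOn ℝ 2 g W := hgV.mono (inter_subset_right.trans interior_subset)
  have hdf : ∀ x ∈ W, DifferentiableAt ℝ f x := fun x hx =>
    (hfW.differentiableOn (by norm_num)).differentiableAt (hWopen.mem_nhds hx)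
  have hdg : ∀ x ∈ W, DifferentiableAt ℝ g x := fun x hx =>
    (hgW.differentiableOn (by norm_num)).differentiableAt (hWopen.mem_nhds hx)
  have h1 : deriv (fun t => f t + g t) =ᶠ[nhds 0] fun t => deriv f t + deriv g t := by
    filter_upwards [hWopen.mem_nhds h0W] with x hx
    exact deriv_add (hdf x hx) (hdg x hx)
  have hdf' : DifferentiableAt ℝ (deriv f) 0 :=
    ((hfW.deriv_of_isOpen hWopen (by norm_num) : ContDiffOn ℝ 1 _ W).differentiableOn (by norm_num)).differentiableAt
      (hWopen.mem_nhds h0W)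
  have hdg' : DifferentiableAt ℝ (deriv g) 0 :=
    ((hgW.deriv_of_isOpen hWopen (by norm_num) : ContDiffOn ℝ 1 _ W).differentiableOn (by norm_num)).differentiableAt
      (hWopen.mem_nhds h0W)
  rw [iteratedDeriv2_eq, iteratedDeriv2_eq, iteratedDeriv2_eq, h1.deriv_eq]
  exact deriv_add hdf' hdg'

lemma lap_add {u v : ℂ → ℝ} {z : ℂ} (hu : ContDiffAt ℝ 2 u z) (hv : ContDiffAt ℝ 2 v z) :
    lap (fun w => u w + v w) z = lap u z + lap v z := by
  simp only [lap_def']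
  rw [iteratedDeriv2_add (slice_contDiffAt hu 1) (slice_contDiffAt hv 1),
    iteratedDeriv2_add (slice_contDiffAt hu Complex.I) (slice_contDiffAt hv Complex.I)]
  ring

lemma analyticAt_deriv {h : ℂ → ℂ} {z : ℂ} (hh : AnalyticAt ℂ h z) :
    AnalyticAt ℂ (deriv h) z := by
  obtain ⟨s, hs, hana⟩ := eventually_iff_exists_mem.1 hh.eventually_analyticAt
  exact (AnalyticOnNhd.deriv (fun w hw => hana w hw)) z (mem_of_mem_nhds hs)

lemma slice_comp (u : ℂ → ℝ) (h : ℂ → ℂ) (z c : ℂ) (hu : ContDiffAt ℝ 2 u (h z))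
    (hh : AnalyticAt ℂ h z) :
    iteratedDeriv 2 (fun t : ℝ => u (h (z + (t:ℂ) * c))) 0 =
      (fderiv ℝ (fderiv ℝ u) (h z) (deriv h z * c)) (deriv h z * c)
        + (fderiv ℝ u (h z)) (deriv (deriv h) z * (c * c)) := by
  obtain ⟨U, hUnh, huU⟩ := hu.contDiffOn le_rfl (by simp)
  set W := interior U with hWdef
  have hWopen : IsOpen W := isOpen_interior
  have hzW : h z ∈ W := mem_interior_iff_mem_nhds.2 hUnh
  have huW : ContDiffOn ℝ 2 u W := huU.mono interior_subset
  have hdu : ∀ w ∈ W, DifferentiableAt ℝ u w := fun w hw =>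
    (huW.differentiableOn (by norm_num)).differentiableAt (hWopen.mem_nhds hw)
  have hfd1 : ContDiffOn ℝ 1 (fderiv ℝ u) W := huW.fderiv_of_isOpen hWopen (by norm_num)
  have hfdW : DifferentiableAt ℝ (fderiv ℝ u) (h z) :=
    (hfd1.differentiableOn (by norm_num)).differentiableAt (hWopen.mem_nhds hzW)
  set ℓ : ℝ → ℂ := fun t => z + (t:ℂ) * c with hℓdef
  have hℓ0 : ℓ 0 = z := by simp [hℓdef]
  have hℓcont : Continuous ℓ := by continuity
  have hℓtend : Tendsto ℓ (nhds 0) (nhds z) := by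
    have := hℓcont.tendsto 0
    rwa [hℓ0] at this
  have hev : ∀ᶠ t in nhds (0:ℝ), AnalyticAt ℂ h (ℓ t) ∧ h (ℓ t) ∈ W := by
    have e1 : ∀ᶠ t in nhds (0:ℝ), AnalyticAt ℂ h (ℓ t) :=
      hℓtend.eventually hh.eventually_analyticAt
    have e2 : ∀ᶠ t in nhds (0:ℝ), h (ℓ t) ∈ W := by
      have hcA : Tendsto (fun t => h (ℓ t)) (nhds 0) (nhds (h z)) :=
        (hh.continuousAt.tendsto).comp hℓtend
      exact hcA.eventually (hWopen.eventually_mem hzW)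
    exact e1.and e2
  have hg' : ∀ᶠ t in nhds (0:ℝ),
      HasDerivAt (fun s => h (ℓ s)) (deriv h (ℓ t) * c) t := by
    filter_upwards [hev] with t ht
    exact HasDerivAt.comp t ht.1.differentiableAt.hasDerivAt (hasDerivAt_line z c t)
  have hφ' : deriv (fun s => u (h (ℓ s)))
      =ᶠ[nhds 0] fun t => (fderiv ℝ u (h (ℓ t))) (deriv h (ℓ t) * c) := by
    filter_upwards [hev, hg'] with t ht hgt
    exact ((hdu _ ht.2).hasFDerivAt.comp_hasDerivAt t hgt).deriv
  rw [iteratedDeriv2_eq, hφ'.deriv_eq]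
  -- derivative of t ↦ (fderiv u (h (ℓ t))) (deriv h (ℓ t) * c) at 0
  have hA : HasDerivAt (fun t => fderiv ℝ u (h (ℓ t)))
      (fderiv ℝ (fderiv ℝ u) (h z) (deriv h z * c)) 0 := by
    have hg0 : HasDerivAt (fun s => h (ℓ s)) (deriv h (ℓ 0) * c) 0 := by
      have := hg'.self_of_nhds
      exact this
    rw [hℓ0] at hg0
    have hfdW' : HasFDerivAt (fderiv ℝ u) (fderiv ℝ (fderiv ℝ u) (h z))
        ((fun s => h (ℓ s)) 0) := by
      show HasFDerivAt (fderiv ℝ u) (fderiv ℝ (fderiv ℝ u) (h z)) (h (ℓ 0))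
      rw [hℓ0]
      exact hfdW.hasFDerivAt
    have := hfdW'.comp_hasDerivAt 0 hg0
    exact this
  have hb : HasDerivAt (fun t => deriv h (ℓ t) * c) (deriv (deriv h) z * c * c) 0 := by
    have hdh : AnalyticAt ℂ (deriv h) z := analyticAt_deriv hh
    have h1 : HasDerivAt (fun s => deriv h (ℓ s)) (deriv (deriv h) z * c) 0 := by
      have hd0 : HasDerivAt (deriv h) (deriv (deriv h) z) (ℓ 0) := by
        rw [hℓ0]
        exact hdh.differentiableAt.hasDerivAt
      have := HasDerivAt.comp 0 hd0 (hasDerivAt_line z c 0)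
      exact this
    exact h1.mul_const c
  have := hA.clm_apply hb
  rw [this.deriv]
  simp [hℓ0, mul_assoc]

lemma B_expand (B : ℂ →L[ℝ] ℂ →L[ℝ] ℝ) (a : ℂ) :
    B a a + B (a * Complex.I) (a * Complex.I)
      = ‖a‖^2 * (B 1 1 + B Complex.I Complex.I) := by
  have ha : a = a.re • (1:ℂ) + a.im • Complex.I := by
    simp [Complex.real_smul, Complex.re_add_im]
  have haI : a * Complex.I = (-a.im) • (1:ℂ) + a.re • Complex.I := by
    apply Complex.ext <;> simp
  rw [show B a a = B (a.re • (1:ℂ) + a.im • Complex.I) (a.re • (1:ℂ) + a.im • Complex.I) from by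
    rw [← ha], haI]
  simp only [map_add, map_smul, ContinuousLinearMap.add_apply, ContinuousLinearMap.smul_apply,
    smul_eq_mul]
  have hnorm : ‖a‖^2 = a.re^2 + a.im^2 := by
    rw [Complex.sq_norm, Complex.normSq_apply]; ring
  rw [hnorm]; ring

lemma lap_eq_snd {u : ℂ → ℝ} {w : ℂ} (hu : ContDiffAt ℝ 2 u w) :
    lap u w = (fderiv ℝ (fderiv ℝ u) w) 1 1
      + (fderiv ℝ (fderiv ℝ u) w) Complex.I Complex.I := by
  have hid : AnalyticAt ℂ (id : ℂ → ℂ) w := analyticAt_id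
  have h1 := slice_comp u id w 1 hu hid
  have hI := slice_comp u id w Complex.I hu hid
  have hdd : deriv (deriv (id : ℂ → ℂ)) w = 0 := by
    have : deriv (id : ℂ → ℂ) = fun _ => 1 := funext fun x => deriv_id x
    rw [this, deriv_const]
  simp only [id_eq, deriv_id, hdd, one_mul, mul_one, zero_mul, map_zero, add_zero] at h1 hI
  simp only [lap]
  rw [h1, hI]

lemma lap_comp {u : ℂ → ℝ} {h : ℂ → ℂ} {z : ℂ} (hu : ContDiffAt ℝ 2 u (h z))
    (hh : AnalyticAt ℂ h z) :
    lap (fun w => u (h w)) z = ‖deriv h z‖^2 * lap u (h z) := by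
  have h1 := slice_comp u h z 1 hu hh
  have hI := slice_comp u h z Complex.I hu hh
  have h1' : iteratedDeriv 2 (fun t : ℝ => u (h (z + (t:ℂ)))) 0
      = (fderiv ℝ (fderiv ℝ u) (h z) (deriv h z)) (deriv h z)
        + (fderiv ℝ u (h z)) (deriv (deriv h) z) := by
    rw [show (fun t : ℝ => u (h (z + (t:ℂ)))) = fun t : ℝ => u (h (z + (t:ℂ) * 1)) from by
      funext t; rw [mul_one], h1]
    simp
  rw [lap_eq_snd hu]
  simp only [lap]
  rw [h1', hI]
  have hcancel : (fderiv ℝ u (h z)) (deriv (deriv h) z)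
      + (fderiv ℝ u (h z)) (deriv (deriv h) z * (Complex.I * Complex.I)) = 0 := by
    rw [Complex.I_mul_I, mul_neg_one, map_neg]
    ring
  have hexp := B_expand (fderiv ℝ (fderiv ℝ u) (h z)) (deriv h z)
  linarith [hexp, hcancel]

lemma lap_re_const (C : ℝ) (ζ : ℂ) : lap (fun w : ℂ => w.re + C) ζ = 0 := by
  simp only [lap]
  have k1 : (fun t : ℝ => (ζ + (t:ℂ)).re + C) = fun t : ℝ => (ζ.re + C) + 1 * t := by
    funext t; simp; ring
  have kI : (fun t : ℝ => (ζ + (t:ℂ) * Complex.I).re + C) = fun t : ℝ => (ζ.re + C) + 0 * t := by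
    funext t; simp
  rw [k1, kI, iteratedDeriv2_affine, iteratedDeriv2_affine]
  norm_num

lemma lap_log_sq {a : ℂ} {ρ : ℝ} {z : ℂ} (hD : 0 < ρ^2 - Complex.normSq (z - a)) :
    lap (fun w => Real.log (ρ^2 - Complex.normSq (w - a))) z
      = (-4*ρ^2) / (ρ^2 - Complex.normSq (z - a))^2 := by
  simp only [lap]
  have k1 : (fun t : ℝ => Real.log (ρ^2 - Complex.normSq (z + (t:ℂ) - a)))
      = fun t : ℝ => Real.log ((ρ^2 - Complex.normSq (z - a)) + (-2*(z-a).re) * t + (-1) * t^2) := by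
    funext t; congr 1
    simp [Complex.normSq_apply]
    ring
  have kI : (fun t : ℝ => Real.log (ρ^2 - Complex.normSq (z + (t:ℂ) * Complex.I - a)))
      = fun t : ℝ => Real.log ((ρ^2 - Complex.normSq (z - a)) + (-2*(z-a).im) * t + (-1) * t^2) := by
    funext t; congr 1
    simp [Complex.normSq_apply]
    ring
  rw [k1, kI, iteratedDeriv2_log_quad hD, iteratedDeriv2_log_quad hD]
  have hns : Complex.normSq (z - a) = (z-a).re^2 + (z-a).im^2 := by
    rw [Complex.normSq_apply]; ring
  have hA : (ρ^2 - Complex.normSq (z - a)) ≠ 0 := ne_of_gt hD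
  rw [← add_div]
  congr 1
  rw [hns] at *
  ring
lemma contDiffAt_quad (ρ : ℝ) (a z : ℂ) :
    ContDiffAt ℝ 2 (fun w : ℂ => ρ^2 - Complex.normSq (w - a)) z := by
  have h1 : ContDiff ℝ 2 (fun w : ℂ => Complex.normSq w) := by
    have : (fun w : ℂ => Complex.normSq w) = fun w : ℂ => w.re * w.re + w.im * w.im := by
      funext w; rw [Complex.normSq_apply]
    rw [this]
    exact (Complex.reCLM.contDiff.mul Complex.reCLM.contDiff).add
      (Complex.imCLM.contDiff.mul Complex.imCLM.contDiff) |>.of_le le_top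
  exact (contDiffAt_const.sub ((h1.comp (contDiff_id.sub contDiff_const)).contDiffAt))

lemma lap_nonpos_of_localmax {u : ℂ → ℝ} {z : ℂ} (hu : ContDiffAt ℝ 2 u z)
    (hmax : IsLocalMax u z) : lap u z ≤ 0 := by
  have key : ∀ c : ℂ, iteratedDeriv 2 (fun t : ℝ => u (z + (t:ℂ) * c)) 0 ≤ 0 := by
    intro c
    apply secondDerivTest (slice_contDiffAt hu c)
    have hℓtend : Filter.Tendsto (fun t : ℝ => z + (t:ℂ) * c) (nhds 0) (nhds z) := by
      have hcont : Continuous fun t : ℝ => z + (t:ℂ) * c :=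
        continuous_const.add (Complex.continuous_ofReal.mul continuous_const)
      have := hcont.tendsto 0
      simpa using this
    have hev := hℓtend.eventually hmax
    refine hev.mono fun t ht => ?_
    simpa using ht
  have k1 := key 1
  have kI := key Complex.I
  rw [show (fun t : ℝ => u (z + (t:ℂ) * 1)) = fun t : ℝ => u (z + (t:ℂ)) from by
    funext t; rw [mul_one]] at k1
  simp only [lap]
  linarith

set_option maxHeartbeats 1000000 in
lemma ahlfors_schwarz {G : Set ℂ} (hG : IsOpen G)
    {lam : ℂ → ℝ} (hpos : ∀ z ∈ G, 0 < lam z) (hC2 : ContDiffOn ℝ 2 lam G)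
    (hcurv : ∀ z ∈ G, (lam z) ^ 2 ≤ lap (fun w => Real.log (lam w)) z)
    {h : ℂ → ℂ} {a : ℂ} {R : ℝ} (hR : 0 < R)
    (hd : DifferentiableOn ℂ h (Metric.ball a R))
    (hmaps : ∀ z ∈ Metric.ball a R, h z ∈ G) :
    lam (h a) * ‖deriv h a‖ ≤ 2 / R := by
  have hanal : AnalyticOnNhd ℂ h (Metric.ball a R) := hd.analyticOnNhd Metric.isOpen_ball
  have hda : AnalyticOnNhd ℂ (deriv h) (Metric.ball a R) := hanal.deriv
  have lamcont : ContinuousOn lam G := hC2.continuousOn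
  have key : ∀ ρ : ℝ, 0 < ρ → ρ < R → lam (h a) * ‖deriv h a‖ ≤ 2 / ρ := by
    intro ρ hρ hρR
    have hcball : Metric.closedBall a ρ ⊆ Metric.ball a R := by
      intro z hz
      rw [Metric.mem_closedBall] at hz
      rw [Metric.mem_ball]
      linarith
    set v : ℂ → ℝ := fun z => lam (h z) * ‖deriv h z‖ * (ρ^2 - Complex.normSq (z - a)) with hvdef
    have hvcont : ContinuousOn v (Metric.closedBall a ρ) := by
      have hhc : ContinuousOn h (Metric.closedBall a ρ) := hd.continuousOn.mono hcball
      have hlamh : ContinuousOn (fun z => lam (h z)) (Metric.closedBall a ρ) :=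
        lamcont.comp hhc (fun z hz => hmaps _ (hcball hz))
      have hdc : ContinuousOn (fun z => ‖deriv h z‖) (Metric.closedBall a ρ) :=
        ((hda.continuousOn).mono hcball).norm
      have hqc : ContinuousOn (fun z : ℂ => ρ^2 - Complex.normSq (z - a))
          (Metric.closedBall a ρ) :=
        (continuous_const.sub (Complex.continuous_normSq.comp
          (continuous_id.sub continuous_const))).continuousOn
      exact (hlamh.mul hdc).mul hqc
    obtain ⟨z₀, hz₀, hmax⟩ := (isCompact_closedBall a ρ).exists_isMaxOn
      ⟨a, by simp [hρ.le]⟩ hvcont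
    have hz₀R : z₀ ∈ Metric.ball a R := hcball hz₀
    have hGz₀ : h z₀ ∈ G := hmaps _ hz₀R
    have lampos : 0 < lam (h z₀) := hpos _ hGz₀
    have hM : v z₀ ≤ 2 * ρ := by
      by_contra hMgt
      push_neg at hMgt
      have hvpos : 0 < v z₀ := lt_trans (by linarith) hMgt
      -- extract positivity of the factors
      have hfac : 0 < ‖deriv h z₀‖ * (ρ^2 - Complex.normSq (z₀ - a)) := by
        by_contra hle
        push_neg at hle
        have : v z₀ ≤ 0 := by
          rw [hvdef]
          calc lam (h z₀) * ‖deriv h z₀‖ * (ρ^2 - Complex.normSq (z₀ - a))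
              = lam (h z₀) * (‖deriv h z₀‖ * (ρ^2 - Complex.normSq (z₀ - a))) := by ring
            _ ≤ 0 := mul_nonpos_of_nonneg_of_nonpos lampos.le hle
        linarith
      have hdz₀ : deriv h z₀ ≠ 0 := by
        intro hcon
        rw [hcon] at hfac
        simp at hfac
      have hnpos : 0 < ‖deriv h z₀‖ := norm_pos_iff.2 hdz₀
      have hD₀ : 0 < ρ^2 - Complex.normSq (z₀ - a) := by
        rcases mul_pos_iff.1 hfac with ⟨_, hp⟩ | ⟨hn, _⟩
        · exact hp
        · linarith
      -- z₀ is interior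
      have hz₀int : z₀ ∈ Metric.ball a ρ := by
        rw [Metric.mem_ball, dist_eq_norm]
        have hns : Complex.normSq (z₀ - a) = ‖z₀ - a‖^2 := by
          rw [← Complex.sq_norm]
        have hlt : ‖z₀ - a‖^2 < ρ^2 := by linarith
        exact lt_of_pow_lt_pow_left₀ 2 hρ.le hlt
      have hnhds : Metric.closedBall a ρ ∈ nhds z₀ :=
        Filter.mem_of_superset (Metric.isOpen_ball.mem_nhds hz₀int) Metric.ball_subset_closedBall
      have hvmax : IsLocalMax v z₀ := hmax.isLocalMax hnhds
      -- the comparison function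
      set C₂ : ℝ := Real.log ‖deriv h z₀‖ with hC₂def
      set q : ℂ → ℂ := fun z => Complex.log (deriv h z / deriv h z₀) with hqdef
      set φ : ℂ → ℝ := fun z =>
        Real.log (lam (h z)) + ((q z).re + C₂) + Real.log (ρ^2 - Complex.normSq (z - a))
        with hφdef
      -- φ = log v near z₀, so it has a local max at z₀
      have hlogv : ∀ z : ℂ, z ∈ Metric.ball a R → 0 < lam (h z) → deriv h z ≠ 0 →
          0 < ρ^2 - Complex.normSq (z - a) → φ z = Real.log (v z) := by
        intro z hzR hlam hdz hD
        have hre : (q z).re = Real.log ‖deriv h z‖ - C₂ := by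
          rw [hqdef]
          simp only [Complex.log_re]
          rw [norm_div, Real.log_div (by simpa using hdz) (by simpa using hdz₀)]
        rw [hφdef, hvdef]
        simp only
        rw [Real.log_mul (mul_pos hlam (norm_pos_iff.2 hdz)).ne' hD.ne',
          Real.log_mul hlam.ne' (norm_pos_iff.2 hdz).ne', hre]
        ring
      have hana_z₀ : AnalyticAt ℂ h z₀ := hanal z₀ hz₀R
      have hda_z₀ : AnalyticAt ℂ (deriv h) z₀ := hda z₀ hz₀R
      have hqa : AnalyticAt ℂ q z₀ := by
        apply AnalyticAt.clog
        · exact hda_z₀.div analyticAt_const hdz₀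
        · simp [div_self hdz₀, Complex.one_mem_slitPlane]
      -- local max of φ
      have hφmax : IsLocalMax φ z₀ := by
        have hev1 : ∀ᶠ z in nhds z₀, z ∈ Metric.ball a R :=
          Metric.isOpen_ball.eventually_mem hz₀R
        have hev2 : ∀ᶠ z in nhds z₀, 0 < lam (h z) := by
          have lamAt : ContinuousAt (fun z => lam (h z)) z₀ :=
            (lamcont.continuousAt (hG.mem_nhds hGz₀)).comp hana_z₀.continuousAt
          exact lamAt.eventually_mem (Ioi_mem_nhds lampos)
        have hev3 : ∀ᶠ z in nhds z₀, deriv h z ≠ 0 :=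
          hda_z₀.continuousAt.eventually_ne hdz₀
        have hev4 : ∀ᶠ z in nhds z₀, 0 < ρ^2 - Complex.normSq (z - a) := by
          have : ContinuousAt (fun z : ℂ => ρ^2 - Complex.normSq (z - a)) z₀ :=
            (continuous_const.sub (Complex.continuous_normSq.comp
              (continuous_id.sub continuous_const))).continuousAt
          exact this.eventually_mem (Ioi_mem_nhds hD₀)
        have heq0 : φ z₀ = Real.log (v z₀) := hlogv z₀ hz₀R lampos hdz₀ hD₀
        filter_upwards [hev1, hev2, hev3, hev4, hvmax] with z h1 h2 h3 h4 h5
        rw [hlogv z h1 h2 h3 h4, heq0]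
        have hvz : 0 < v z := by
          simp only [hvdef]
          exact mul_pos (mul_pos h2 (norm_pos_iff.2 h3)) h4
        exact Real.log_le_log hvz h5
      -- smoothness of the pieces
      have hh2 : ContDiffAt ℝ 2 h z₀ := (hana_z₀.contDiffAt).restrict_scalars ℝ
      have hu1 : ContDiffAt ℝ 2 (fun w => Real.log (lam w)) (h z₀) :=
        (Real.contDiffAt_log.2 lampos.ne').comp (h z₀) (hC2.contDiffAt (hG.mem_nhds hGz₀))
      have hs1 : ContDiffAt ℝ 2 (fun z => Real.log (lam (h z))) z₀ := hu1.comp z₀ hh2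
      have hq2 : ContDiffAt ℝ 2 q z₀ := (hqa.contDiffAt).restrict_scalars ℝ
      have hu2 : ContDiffAt ℝ 2 (fun w : ℂ => w.re + C₂) (q z₀) :=
        ((Complex.reCLM.contDiff.of_le le_top).contDiffAt).add contDiffAt_const
      have hs2 : ContDiffAt ℝ 2 (fun z => (q z).re + C₂) z₀ := hu2.comp z₀ hq2
      have hs3 : ContDiffAt ℝ 2 (fun z : ℂ => Real.log (ρ^2 - Complex.normSq (z - a))) z₀ :=
        ContDiffAt.comp (g := Real.log) z₀ (Real.contDiffAt_log.2 hD₀.ne') (contDiffAt_quad ρ a z₀)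
      have hφC2 : ContDiffAt ℝ 2 φ z₀ := (hs1.add hs2).add hs3
      -- Laplacian of φ at z₀ is ≤ 0
      have hlap_nonpos : lap φ z₀ ≤ 0 := lap_nonpos_of_localmax hφC2 hφmax
      -- compute the Laplacian
      have e1 := lap_add (u := fun z => Real.log (lam (h z)) + ((q z).re + C₂))
        (v := fun z : ℂ => Real.log (ρ^2 - Complex.normSq (z - a))) (z := z₀)
        (hs1.add hs2) hs3
      have e2 := lap_add (u := fun z => Real.log (lam (h z)))
        (v := fun z => (q z).re + C₂) (z := z₀) hs1 hs2
      have hlapφ : lap φ z₀ = lap (fun z => Real.log (lam (h z))) z₀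
          + lap (fun z => (q z).re + C₂) z₀
          + lap (fun z : ℂ => Real.log (ρ^2 - Complex.normSq (z - a))) z₀ := by
        rw [hφdef]
        exact e1.trans (by rw [e2])
      have hlap1 : lap (fun z => Real.log (lam (h z))) z₀
          = ‖deriv h z₀‖^2 * lap (fun w => Real.log (lam w)) (h z₀) :=
        lap_comp (u := fun w => Real.log (lam w)) (h := h) (z := z₀) hu1 hana_z₀
      have hlap2 : lap (fun z => (q z).re + C₂) z₀ = 0 := by
        have := lap_comp (u := fun w : ℂ => w.re + C₂) (h := q) (z := z₀) hu2 hqa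
        rw [this, lap_re_const]
        ring
      have hlap3 : lap (fun z : ℂ => Real.log (ρ^2 - Complex.normSq (z - a))) z₀
          = (-4*ρ^2) / (ρ^2 - Complex.normSq (z₀ - a))^2 := lap_log_sq hD₀
      have hcurv₀ := hcurv _ hGz₀
      have hlb : ‖deriv h z₀‖^2 * (lam (h z₀))^2
          ≤ ‖deriv h z₀‖^2 * lap (fun w => Real.log (lam w)) (h z₀) := by
        apply mul_le_mul_of_nonneg_left hcurv₀ (by positivity)
      -- contradiction
      have habs : Complex.normSq (z₀ - a) = ‖z₀ - a‖^2 := by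
        rw [← Complex.sq_norm]
      have hv2 : (2*ρ)^2 < (v z₀)^2 := by
        exact pow_lt_pow_left₀ hMgt (by positivity) (by norm_num)
      have hveq : (v z₀)^2 = (lam (h z₀))^2 * ‖deriv h z₀‖^2
          * (ρ^2 - Complex.normSq (z₀ - a))^2 := by
        rw [hvdef]; ring
      have hD₀2 : 0 < (ρ^2 - Complex.normSq (z₀ - a))^2 := by positivity
      have hfinal : -(‖deriv h z₀‖^2 * (lam (h z₀))^2)
          < (-4*ρ^2) / (ρ^2 - Complex.normSq (z₀ - a))^2 := by
        rw [lt_div_iff₀ hD₀2]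
        nlinarith [hv2, hveq]
      linarith [hlap_nonpos, hlapφ, hlap1, hlap2, hlap3, hlb, hfinal]
    -- conclude for this ρ
    have hva : v a ≤ 2 * ρ :=
      le_trans (hmax (show a ∈ Metric.closedBall a ρ from by simp [hρ.le])) hM
    have hva' : lam (h a) * ‖deriv h a‖ * ρ^2 ≤ 2 * ρ := by
      have : v a = lam (h a) * ‖deriv h a‖ * ρ^2 := by
        rw [hvdef]; simp
      linarith [hva, this.symm.le]
    rw [le_div_iff₀ hρ]
    nlinarith [hva']
  -- let ρ → R
  by_contra hcon
  push_neg at hcon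
  have hq0 : 0 < lam (h a) * ‖deriv h a‖ := lt_trans (by positivity) hcon
  set Q := lam (h a) * ‖deriv h a‖ with hQdef
  have h2Q : 2 / Q < R := by
    rw [div_lt_iff₀ hq0]
    rw [div_lt_iff₀ hR] at hcon
    linarith
  set ρ := (2 / Q + R) / 2 with hρdef
  have hρpos : 0 < ρ := by positivity
  have hρR : ρ < R := by rw [hρdef]; linarith
  have := key ρ hρpos hρR
  have : Q ≤ 2 / ρ := this
  rw [le_div_iff₀ hρpos] at this
  have h2q : 2 / Q < ρ := by rw [hρdef]; linarith
  rw [div_lt_iff₀ hq0] at h2q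
  nlinarith

lemma deriv_bound {G : Set ℂ} (hG : IsOpen G)
    {lam : ℂ → ℝ} (hpos : ∀ z ∈ G, 0 < lam z) (hC2 : ContDiffOn ℝ 2 lam G)
    (hcurv : ∀ z ∈ G, (lam z) ^ 2 ≤ lap (fun w => Real.log (lam w)) z)
    {f : ℂ → ℂ} (hf : DifferentiableOn ℂ f (Metric.ball 0 1 \ {0}))
    (hmaps : ∀ z ∈ Metric.ball (0:ℂ) 1 \ {0}, f z ∈ G)
    {z : ℂ} (hz : z ∈ Metric.ball (0:ℂ) 1 \ {0}) :
    lam (f z) * (‖deriv f z‖ * ‖z‖) ≤ 2 / (-Real.log ‖z‖) := by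
  have hSopen : IsOpen (Metric.ball (0:ℂ) 1 \ {0}) :=
    Metric.isOpen_ball.sdiff isClosed_singleton
  obtain ⟨hz1, hz0'⟩ := hz
  have hz0 : z ≠ 0 := fun hc => hz0' (by simp [hc])
  have hzn : 0 < ‖z‖ := norm_pos_iff.2 hz0
  have hzlt : ‖z‖ < 1 := by
    rw [Metric.mem_ball, dist_zero_right] at hz1
    exact hz1
  have hlogneg : Real.log ‖z‖ < 0 := Real.log_neg hzn hzlt
  set w := Complex.log z with hwdef
  have hwre : w.re = Real.log ‖z‖ := by
    rw [hwdef, Complex.log_re]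
  set R := -Real.log ‖z‖ with hRdef
  have hR : 0 < R := by rw [hRdef]; linarith
  have hmapexp : ∀ ζ ∈ Metric.ball w R, Complex.exp ζ ∈ Metric.ball (0:ℂ) 1 \ {0} := by
    intro ζ hζ
    rw [Metric.mem_ball] at hζ
    have hreζ : ζ.re < 0 := by
      have h1 : (ζ - w).re ≤ ‖ζ - w‖ := Complex.re_le_norm _
      have h2 : ‖ζ - w‖ < R := by rwa [Complex.dist_eq] at hζ
      have h3 : (ζ - w).re = ζ.re - w.re := Complex.sub_re ζ w
      rw [hwre] at h3
      rw [hRdef] at h2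
      linarith [h1, h2, h3.symm.le, h3.le]
    constructor
    · rw [Metric.mem_ball, dist_zero_right, Complex.norm_exp]
      exact Real.exp_lt_one_iff.2 hreζ
    · simp [Complex.exp_ne_zero]
  have hdexp : DifferentiableOn ℂ (fun ζ => f (Complex.exp ζ)) (Metric.ball w R) := by
    apply DifferentiableOn.comp hf (Complex.differentiable_exp.differentiableOn) hmapexp
  have hmaps' : ∀ ζ ∈ Metric.ball w R, f (Complex.exp ζ) ∈ G := fun ζ hζ =>
    hmaps _ (hmapexp ζ hζ)
  have key := ahlfors_schwarz hG hpos hC2 hcurv hR hdexp hmaps'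
  have hexpw : Complex.exp w = z := Complex.exp_log hz0
  have hfd : DifferentiableAt ℂ f z := hf.differentiableAt (hSopen.mem_nhds ⟨hz1, hz0'⟩)
  have hderiv : deriv (fun ζ => f (Complex.exp ζ)) w = deriv f z * z := by
    have := deriv_comp w (by rwa [hexpw]) (Complex.differentiable_exp.differentiableAt)
    rw [Function.comp_def] at this
    rw [this, Complex.deriv_exp, hexpw]
  rw [hexpw, hderiv] at key
  rw [norm_mul] at key
  exact key


lemma curve_stays {γ γ' : ℝ → ℂ} {w₀ : ℂ} {δ M : ℝ} (hδ : 0 < δ)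
    (hγcont : Continuous γ)
    (hγ' : ∀ s : ℝ, HasDerivAt γ (γ' s) s)
    (hbound : ∀ s : ℝ, dist (γ s) w₀ ≤ δ → ‖γ' s‖ ≤ M)
    (h0 : dist (γ 0) w₀ < δ/2) (hM : 2*Real.pi*M < δ/2) (hMpos : 0 ≤ M) :
    ∀ s ∈ Set.Icc (0:ℝ) (2*Real.pi), dist (γ s) w₀ ≤ δ := by
  have hπ : 0 < Real.pi := Real.pi_pos
  set T : Set ℝ := {s : ℝ | s ∈ Set.Icc (0:ℝ) (2*Real.pi) ∧
    ∀ t ∈ Set.Icc (0:ℝ) s, dist (γ t) w₀ ≤ δ} with hTdef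
  have hT0 : (0:ℝ) ∈ T := by
    refine ⟨⟨le_rfl, by positivity⟩, ?_⟩
    intro t ht
    have : t = 0 := le_antisymm ht.2 ht.1
    rw [this]
    linarith
  have hTne : T.Nonempty := ⟨0, hT0⟩
  have hTbdd : BddAbove T := ⟨2*Real.pi, fun s hs => hs.1.2⟩
  set m := sSup T with hmdef
  have hm0 : 0 ≤ m := le_csSup hTbdd hT0
  have hm2π : m ≤ 2*Real.pi := csSup_le hTne (fun s hs => hs.1.2)
  have hmem : ∀ t, 0 ≤ t → t < m → dist (γ t) w₀ ≤ δ := by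
    intro t ht0 htm
    obtain ⟨s, hsT, hts⟩ := exists_lt_of_lt_csSup hTne htm
    exact hsT.2 t ⟨ht0, hts.le⟩
  have hγm : dist (γ m) w₀ ≤ δ := by
    rcases eq_or_lt_of_le hm0 with hm0' | hm0'
    · rw [← hm0']
      linarith
    · have hC : IsClosed {s : ℝ | dist (γ s) w₀ ≤ δ} :=
        isClosed_le (Continuous.dist hγcont continuous_const) continuous_const
      have hsub : Set.Ico (0:ℝ) m ⊆ {s : ℝ | dist (γ s) w₀ ≤ δ} :=
        fun t ht => hmem t ht.1 ht.2
      have : m ∈ closure (Set.Ico (0:ℝ) m) := by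
        rw [closure_Ico (ne_of_lt hm0')]
        exact ⟨hm0, le_rfl⟩
      exact (closure_minimal hsub hC) this
  have hmT : m ∈ T := by
    refine ⟨⟨hm0, hm2π⟩, ?_⟩
    intro t ht
    rcases eq_or_lt_of_le ht.2 with h | h
    · rw [h]; exact hγm
    · exact hmem t ht.1 h
  have hMVT := norm_image_sub_le_of_norm_deriv_le_segment'
    (f := γ) (f' := γ') (a := 0) (b := m) (C := M)
    (fun x hx => (hγ' x).hasDerivWithinAt)
    (fun x hx => hbound x (hmT.2 x ⟨hx.1, hx.2.le⟩))
  have hstrict : ∀ s ∈ Set.Icc (0:ℝ) m, dist (γ s) w₀ < δ := by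
    intro s hs
    have h1 : ‖γ s - γ 0‖ ≤ M * (s - 0) := hMVT s hs
    have h2 : M * (s - 0) ≤ M * (2*Real.pi) := by
      apply mul_le_mul_of_nonneg_left _ hMpos
      have := le_trans hs.2 hm2π
      linarith
    calc dist (γ s) w₀ ≤ dist (γ s) (γ 0) + dist (γ 0) w₀ := dist_triangle _ _ _
      _ = ‖γ s - γ 0‖ + dist (γ 0) w₀ := by rw [dist_eq_norm]
      _ < M * (2*Real.pi) + δ/2 := by linarith
      _ < δ := by linarith [hM]
  have hm_eq : m = 2*Real.pi := by
    by_contra hne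
    have hmlt : m < 2*Real.pi := lt_of_le_of_ne hm2π hne
    have hδm : dist (γ m) w₀ < δ := hstrict m ⟨hm0, le_rfl⟩
    have hev : ∀ᶠ s in nhds m, dist (γ s) w₀ < δ := by
      have : ContinuousAt (fun s => dist (γ s) w₀) m :=
        (Continuous.dist hγcont continuous_const).continuousAt
      exact this.eventually_mem (Iio_mem_nhds hδm)
    obtain ⟨η, hη, hball⟩ := Metric.eventually_nhds_iff.1 hev
    set m' := min (m + η/2) (2*Real.pi) with hm'def
    have hmm' : m < m' := lt_min (by linarith) hmlt
    have hm'T : m' ∈ T := by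
      refine ⟨⟨by linarith, min_le_right _ _⟩, ?_⟩
      intro t ht
      rcases le_or_gt t m with h | h
      · exact hmT.2 t ⟨ht.1, h⟩
      · have htm' : t ≤ m + η/2 := le_trans ht.2 (min_le_left _ _)
        have : dist t m < η := by
          rw [Real.dist_eq, abs_of_pos (by linarith)]
          linarith
        exact (hball this).le
    have : m' ≤ m := le_csSup hTbdd hm'T
    linarith
  intro s hs
  rw [← hm_eq] at hs
  exact hmT.2 s hs


lemma circle_bound {G : Set ℂ} (hG : IsOpen G)
    {lam : ℂ → ℝ} (hpos : ∀ z ∈ G, 0 < lam z) (hC2 : ContDiffOn ℝ 2 lam G)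
    (hcurv : ∀ z ∈ G, (lam z) ^ 2 ≤ lap (fun w => Real.log (lam w)) z)
    {f : ℂ → ℂ} (hf : DifferentiableOn ℂ f (Metric.ball 0 1 \ {0}))
    (hmaps : ∀ z ∈ Metric.ball (0:ℂ) 1 \ {0}, f z ∈ G)
    {w₀ : ℂ} {c δ : ℝ} (hc : 0 < c) (hδ : 0 < δ)
    (hδG : ∀ w ∈ Metric.closedBall w₀ δ, w ∈ G ∧ c ≤ lam w)
    {zs : ℂ} (hzs : zs ∈ Metric.ball (0:ℂ) 1 \ {0})
    (hfzs : dist (f zs) w₀ < δ/2)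
    (hK : 2*Real.pi * (2/(c * (-Real.log ‖zs‖))) < δ/2) :
    ∀ x : ℂ, ‖x‖ = ‖zs‖ → dist (f x) w₀ ≤ δ := by
  have hSopen : IsOpen (Metric.ball (0:ℂ) 1 \ {0}) :=
    Metric.isOpen_ball.sdiff isClosed_singleton
  obtain ⟨hzs1, hzs0'⟩ := hzs
  have hzs0 : zs ≠ 0 := fun hc' => hzs0' (by simp [hc'])
  set r := ‖zs‖ with hrdef
  have hr0 : 0 < r := norm_pos_iff.2 hzs0
  have hr1 : r < 1 := by
    rw [Metric.mem_ball, dist_zero_right] at hzs1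
    exact hzs1
  set L := -Real.log r with hLdef
  have hL0 : 0 < L := by
    have := Real.log_neg hr0 hr1
    rw [hLdef]; linarith
  set M := 2/(c*L) with hMdef
  have hM0 : 0 < M := div_pos two_pos (mul_pos hc hL0)
  set θ₀ := zs.arg with hθdef
  set circ : ℝ → ℂ := fun s => (r:ℂ) * Complex.exp ((θ₀:ℂ)*Complex.I + (s:ℂ)*Complex.I)
    with hcircdef
  have hcircnorm : ∀ s : ℝ, ‖circ s‖ = r := by
    intro s
    rw [hcircdef]
    simp only [norm_mul, Complex.norm_exp]
    have hre : ((θ₀:ℂ)*Complex.I + (s:ℂ)*Complex.I).re = 0 := by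
      simp [Complex.add_re, Complex.mul_I_re]
    rw [hre, Real.exp_zero]
    simp [abs_of_pos hr0, hr0.le]
  have hcircS : ∀ s : ℝ, circ s ∈ Metric.ball (0:ℂ) 1 \ {0} := by
    intro s
    constructor
    · rw [Metric.mem_ball, dist_zero_right, hcircnorm s]
      exact hr1
    · simp only [Set.mem_singleton_iff]
      intro hzero
      have := hcircnorm s
      rw [hzero] at this
      simp at this
      exact absurd this.symm (ne_of_gt hr0)
  have hcirc0 : circ 0 = zs := by
    rw [hcircdef]
    simp only [Complex.ofReal_zero, zero_mul, add_zero]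
    rw [hrdef, hθdef]
    exact Complex.norm_mul_exp_arg_mul_I zs
  set γ : ℝ → ℂ := fun s => f (circ s) with hγdef
  set γ' : ℝ → ℂ := fun s =>
    deriv f (circ s) * ((r:ℂ) * (Complex.exp ((θ₀:ℂ)*Complex.I + (s:ℂ)*Complex.I) * Complex.I))
    with hγ'def
  have hcirccont : Continuous circ := by
    apply continuous_const.mul
    exact Complex.continuous_exp.comp
      (continuous_const.add (Complex.continuous_ofReal.mul continuous_const))
  have hγcont : Continuous γ := by
    rw [hγdef]
    exact (hf.continuousOn).comp_continuous hcirccont hcircS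
  have hγdiff : ∀ s : ℝ, HasDerivAt γ (γ' s) s := by
    intro s
    have hcircd : HasDerivAt circ
        ((r:ℂ) * (Complex.exp ((θ₀:ℂ)*Complex.I + (s:ℂ)*Complex.I) * Complex.I)) s := by
      have h1 := (hasDerivAt_line ((θ₀:ℂ)*Complex.I) Complex.I s).cexp
      exact h1.const_mul (r:ℂ)
    have hfd : DifferentiableAt ℂ f (circ s) :=
      hf.differentiableAt (hSopen.mem_nhds (hcircS s))
    exact HasDerivAt.comp s hfd.hasDerivAt hcircd
  have hbound : ∀ s : ℝ, dist (γ s) w₀ ≤ δ → ‖γ' s‖ ≤ M := by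
    intro s hs
    have hin : f (circ s) ∈ Metric.closedBall w₀ δ := Metric.mem_closedBall.2 hs
    have hlam := (hδG _ hin).2
    have hdb := deriv_bound hG hpos hC2 hcurv hf hmaps (hcircS s)
    rw [hcircnorm s] at hdb
    have hX0 : 0 ≤ ‖deriv f (circ s)‖ * r := by positivity
    have h1 : c * (‖deriv f (circ s)‖ * r) ≤ 2 / L := by
      calc c * (‖deriv f (circ s)‖ * r) ≤ lam (f (circ s)) * (‖deriv f (circ s)‖ * r) :=
            mul_le_mul_of_nonneg_right hlam hX0
        _ ≤ 2 / L := hdb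
    have h2 : ‖γ' s‖ = ‖deriv f (circ s)‖ * r := by
      rw [hγ'def]
      simp only [norm_mul]
      have hre : ((θ₀:ℂ)*Complex.I + (s:ℂ)*Complex.I).re = 0 := by
        simp [Complex.add_re, Complex.mul_I_re]
      rw [Complex.norm_exp, hre, Real.exp_zero]
      simp [abs_of_pos hr0, hr0.le]
    rw [h2, hMdef, le_div_iff₀ (mul_pos hc hL0)]
    have h3 : c * (‖deriv f (circ s)‖ * r) * L ≤ 2 := by
      rw [← le_div_iff₀ hL0] at *
      calc c * (‖deriv f (circ s)‖ * r) ≤ 2/L := h1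
        _ = 2/L := rfl
    nlinarith [h3]
  have h0' : dist (γ 0) w₀ < δ/2 := by
    rw [hγdef]
    simp only
    rw [hcirc0]
    exact hfzs
  have hMbound : 2*Real.pi*M < δ/2 := hK
  have hcurve := curve_stays hδ hγcont hγdiff hbound h0' hMbound hM0.le
  -- cover the whole circle
  intro x hx
  have hx0 : x ≠ 0 := by
    intro h
    rw [h] at hx
    simp at hx
    exact absurd hx.symm (ne_of_gt hr0)
  set ψ := x.arg with hψdef
  have hψ1 : ψ ≤ Real.pi := Complex.arg_le_pi x
  have hψ2 : -Real.pi < ψ := Complex.neg_pi_lt_arg x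
  have hθ1 : θ₀ ≤ Real.pi := Complex.arg_le_pi zs
  have hθ2 : -Real.pi < θ₀ := Complex.neg_pi_lt_arg zs
  have hπ : 0 < Real.pi := Real.pi_pos
  have hxeq : x = (r:ℂ) * Complex.exp ((ψ:ℂ) * Complex.I) := by
    have h := Complex.norm_mul_exp_arg_mul_I x
    rw [hx] at h
    exact h.symm
  rcases le_or_gt 0 (ψ - θ₀) with hd | hd
  · have hs : ψ - θ₀ ∈ Set.Icc (0:ℝ) (2*Real.pi) := ⟨hd, by linarith⟩
    have hres := hcurve (ψ - θ₀) hs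
    have hcirceq : circ (ψ - θ₀) = x := by
      have harg : (θ₀:ℂ)*Complex.I + ((ψ - θ₀ : ℝ):ℂ)*Complex.I = (ψ:ℂ)*Complex.I := by
        push_cast
        ring
      rw [hxeq]
      simp only [hcircdef]
      rw [harg]
    simp only [hγdef] at hres
    rwa [hcirceq] at hres
  · have hs : ψ - θ₀ + 2*Real.pi ∈ Set.Icc (0:ℝ) (2*Real.pi) := ⟨by linarith, by linarith⟩
    have hres := hcurve (ψ - θ₀ + 2*Real.pi) hs
    have hcirceq : circ (ψ - θ₀ + 2*Real.pi) = x := by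
      have harg : (θ₀:ℂ)*Complex.I + ((ψ - θ₀ + 2*Real.pi : ℝ):ℂ)*Complex.I
          = (ψ:ℂ)*Complex.I + 2*(Real.pi:ℂ)*Complex.I := by
        push_cast
        ring
      rw [hxeq]
      simp only [hcircdef]
      rw [harg, Complex.exp_add, Complex.exp_two_pi_mul_I, mul_one]
    simp only [hγdef] at hres
    rwa [hcirceq] at hres



set_option maxHeartbeats 1000000 in
/-- Huber's Theorem: if `G` carries a regular conformal metric of curvature
`≤ -1` and `f : 𝔻' → G` is holomorphic with `f(zₙ) → w₀ ∈ G` along some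
sequence `zₙ → 0`, then `0` is a removable singularity of `f`. -/
theorem huber_removable (G : Set ℂ) (hG : IsOpen G) (hGc : IsConnected G)
    (lam : ℂ → ℝ) (hpos : ∀ z ∈ G, 0 < lam z) (hC2 : ContDiffOn ℝ 2 lam G)
    (hcurv : ∀ z ∈ G, (lam z) ^ 2 ≤ lap (fun w => Real.log (lam w)) z)
    (f : ℂ → ℂ) (hf : DifferentiableOn ℂ f (Metric.ball (0 : ℂ) 1 \ {0}))
    (hmaps : ∀ z ∈ Metric.ball (0 : ℂ) 1 \ {0}, f z ∈ G)
    (zseq : ℕ → ℂ) (hzseq : ∀ n, zseq n ∈ Metric.ball (0 : ℂ) 1 \ {0})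
    (hz0 : Filter.Tendsto zseq Filter.atTop (nhds 0))
    (w₀ : ℂ) (hw₀ : w₀ ∈ G)
    (hfz : Filter.Tendsto (fun n => f (zseq n)) Filter.atTop (nhds w₀)) :
    ∃ F : ℂ → ℂ, DifferentiableOn ℂ F (Metric.ball (0 : ℂ) 1) ∧
      ∀ z ∈ Metric.ball (0 : ℂ) 1 \ {0}, F z = f z := by
  have hSopen : IsOpen (Metric.ball (0:ℂ) 1 \ {0}) :=
    Metric.isOpen_ball.sdiff isClosed_singleton
  have hπ : 0 < Real.pi := Real.pi_pos
  -- find δ, c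
  have lamw₀ : 0 < lam w₀ := hpos _ hw₀
  set c := lam w₀ / 2 with hcdef
  have hc : 0 < c := by rw [hcdef]; linarith
  have lamc : ContinuousAt lam w₀ := hC2.continuousOn.continuousAt (hG.mem_nhds hw₀)
  have hev : ∀ᶠ w in nhds w₀, w ∈ G ∧ c ≤ lam w := by
    have h1 : ∀ᶠ w in nhds w₀, w ∈ G := hG.eventually_mem hw₀
    have h2 : ∀ᶠ w in nhds w₀, lam w ∈ Set.Ioi c :=
      lamc.eventually_mem (Ioi_mem_nhds (by rw [hcdef]; linarith))
    filter_upwards [h1, h2] with w hw1 hw2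
    exact ⟨hw1, le_of_lt hw2⟩
  obtain ⟨ε, hε, hball⟩ := Metric.eventually_nhds_iff.1 hev
  set δ := ε/2 with hδdef
  have hδ : 0 < δ := by rw [hδdef]; linarith
  have hδG : ∀ w ∈ Metric.closedBall w₀ δ, w ∈ G ∧ c ≤ lam w := by
    intro w hw
    apply hball
    rw [Metric.mem_closedBall] at hw
    rw [hδdef] at hw
    linarith [hw]
  -- threshold radius
  set K := 1 + 16*Real.pi/(c*δ) with hKdef
  have hKpos : 0 < K := by positivity
  set ρ₀ := Real.exp (-K) with hρ₀def
  have hρ₀0 : 0 < ρ₀ := Real.exp_pos _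
  have hρ₀1 : ρ₀ < 1 := Real.exp_lt_one_iff.2 (by linarith)
  have hKr : ∀ r : ℝ, 0 < r → r < ρ₀ → 2*Real.pi*(2/(c*(-Real.log r))) < δ/2 := by
    intro r h0 hr
    have hL : K < -Real.log r := by
      have := Real.log_lt_log h0 hr
      rw [hρ₀def, Real.log_exp] at this
      linarith
    have hL0 : 0 < -Real.log r := lt_trans hKpos hL
    have hcd : 0 < c * δ := mul_pos hc hδ
    have hcdK : c*δ*K = c*δ + 16*Real.pi := by
      rw [hKdef]
      field_simp
    rw [show 2*Real.pi*(2/(c*(-Real.log r))) = 4*Real.pi/(c*(-Real.log r)) from by ring,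
      div_lt_iff₀ (by positivity)]
    nlinarith [mul_lt_mul_of_pos_left hL hcd, hcdK, hπ, hcd, hL0, hc, hδ]
  -- eventually good
  have hnorm_t : Filter.Tendsto (fun n => ‖zseq n‖) Filter.atTop (nhds 0) := by
    have := hz0.norm
    simpa using this
  have hgood : ∀ᶠ n in Filter.atTop, ‖zseq n‖ < ρ₀ ∧ dist (f (zseq n)) w₀ < δ/2 := by
    have h1 : ∀ᶠ n in Filter.atTop, ‖zseq n‖ < ρ₀ :=
      hnorm_t.eventually (Filter.Tendsto.eventually_lt_const hρ₀0 Filter.tendsto_id)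
    have h2 : ∀ᶠ n in Filter.atTop, dist (f (zseq n)) w₀ < δ/2 :=
      Metric.tendsto_nhds.1 hfz (δ/2) (by linarith)
    exact h1.and h2
  obtain ⟨N, hN⟩ := Filter.eventually_atTop.1 hgood
  -- bound on good circles
  set B := ‖w₀‖ + δ with hBdef
  have hcircleB : ∀ n, N ≤ n → ∀ x : ℂ, ‖x‖ = ‖zseq n‖ → ‖f x‖ ≤ B := by
    intro n hn x hx
    have hzn := hzseq n
    have hzn0 : zseq n ≠ 0 := fun hcon => hzn.2 (by simp [hcon])
    have hrn0 : 0 < ‖zseq n‖ := norm_pos_iff.2 hzn0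
    have hcb := circle_bound hG hpos hC2 hcurv hf hmaps hc hδ hδG hzn (hN n hn).2
      (hKr _ hrn0 (hN n hn).1) x hx
    have := dist_triangle (f x) w₀ 0
    rw [dist_zero_right, dist_zero_right] at this
    rw [hBdef]
    linarith [hcb, this]
  set r₁ := ‖zseq N‖ with hr₁def
  have hzN0 : zseq N ≠ 0 := fun hcon => (hzseq N).2 (by simp [hcon])
  have hr₁0 : 0 < r₁ := norm_pos_iff.2 hzN0
  have hr₁1 : r₁ < 1 := lt_trans (hN N le_rfl).1 hρ₀1
  -- boundedness on the small punctured ball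
  have hbound : ∀ x, x ∈ Metric.ball (0:ℂ) r₁ \ {0} → ‖f x‖ ≤ B := by
    rintro x ⟨hx1, hx0'⟩
    have hx0 : x ≠ 0 := fun hcon => hx0' (by simp [hcon])
    have hrx0 : 0 < ‖x‖ := norm_pos_iff.2 hx0
    have hrx1 : ‖x‖ < r₁ := by
      rw [Metric.mem_ball, dist_zero_right] at hx1
      exact hx1
    -- find a good smaller radius
    obtain ⟨n, hn⟩ := ((hnorm_t.eventually (Filter.Tendsto.eventually_lt_const hrx0
      Filter.tendsto_id)).and (Filter.eventually_ge_atTop N)).exists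
    obtain ⟨hrn, hnN⟩ := hn
    set r' := ‖zseq n‖ with hr'def
    have hzn0 : zseq n ≠ 0 := fun hcon => (hzseq n).2 (by simp [hcon])
    have hr'0 : 0 < r' := norm_pos_iff.2 hzn0
    set U := Metric.ball (0:ℂ) r₁ ∩ (Metric.closedBall (0:ℂ) r')ᶜ with hUdef
    have hUb : Bornology.IsBounded U := Metric.isBounded_ball.subset Set.inter_subset_left
    have hclosU : closure U ⊆ {y : ℂ | r' ≤ ‖y‖ ∧ ‖y‖ ≤ r₁} := by
      intro y hy
      have h1 := closure_inter_subset_inter_closure (Metric.ball (0:ℂ) r₁)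
        ((Metric.closedBall (0:ℂ) r')ᶜ) hy
      constructor
      · have h2 : closure ((Metric.closedBall (0:ℂ) r')ᶜ) ⊆ {y : ℂ | r' ≤ ‖y‖} := by
          apply closure_minimal
          · intro w hw
            simp only [Set.mem_compl_iff, Metric.mem_closedBall, dist_zero_right, not_le] at hw
            exact le_of_lt hw
          · exact isClosed_le continuous_const continuous_norm
        exact h2 h1.2
      · have h3 : closure (Metric.ball (0:ℂ) r₁) ⊆ Metric.closedBall (0:ℂ) r₁ :=
          Metric.closure_ball_subset_closedBall
        have := h3 h1.1
        rwa [Metric.mem_closedBall, dist_zero_right] at this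
    have hclosS : closure U ⊆ Metric.ball (0:ℂ) 1 \ {0} := by
      intro y hy
      obtain ⟨h1, h2⟩ := hclosU hy
      constructor
      · rw [Metric.mem_ball, dist_zero_right]
        linarith
      · simp only [Set.mem_singleton_iff]
        intro hcon
        rw [hcon] at h1
        simp at h1
        linarith
    have hdc : DiffContOnCl ℂ f U :=
      ⟨hf.mono (fun y hy => hclosS (subset_closure hy)), hf.continuousOn.mono hclosS⟩
    have hfr : ∀ y ∈ frontier U, ‖f y‖ ≤ B := by
      intro y hy
      have hsub := frontier_inter_subset (Metric.ball (0:ℂ) r₁)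
        ((Metric.closedBall (0:ℂ) r')ᶜ)
      rcases hsub hy with h | h
      · have : y ∈ Metric.sphere (0:ℂ) r₁ := by
          rw [← frontier_ball (0:ℂ) (ne_of_gt hr₁0)]
          exact h.1
        rw [Metric.mem_sphere, dist_zero_right] at this
        exact hcircleB N le_rfl y (by rw [this])
      · have h2 : y ∈ frontier (Metric.closedBall (0:ℂ) r') := by
          rw [← frontier_compl]
          exact h.2
        rw [frontier_closedBall (0:ℂ) (ne_of_gt hr'0)] at h2
        rw [Metric.mem_sphere, dist_zero_right] at h2
        exact hcircleB n hnN y (by rw [h2])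
    have hxU : x ∈ U := by
      constructor
      · rw [Metric.mem_ball, dist_zero_right]
        exact hrx1
      · simp only [Set.mem_compl_iff, Metric.mem_closedBall, dist_zero_right, not_le]
        exact hrn
    exact Complex.norm_le_of_forall_mem_frontier_norm_le hUb hdc hfr (subset_closure hxU)
  -- removable singularity
  have hnh : Metric.ball (0:ℂ) r₁ ∈ nhds (0:ℂ) := Metric.ball_mem_nhds _ hr₁0
  have hdOn : DifferentiableOn ℂ f (Metric.ball (0:ℂ) r₁ \ {0}) := by
    apply hf.mono
    intro y hy
    exact ⟨Metric.ball_subset_ball (le_of_lt hr₁1) hy.1, hy.2⟩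
  have hba : BddAbove (norm ∘ f '' (Metric.ball (0:ℂ) r₁ \ {0})) := by
    refine ⟨B, ?_⟩
    rintro y ⟨x, hx, rfl⟩
    exact hbound x hx
  have H := Complex.differentiableOn_update_limUnder_of_bddAbove hnh hdOn hba
  refine ⟨Function.update f 0 (limUnder (nhdsWithin 0 {(0:ℂ)}ᶜ) f), ?_, ?_⟩
  · intro x hx
    by_cases hx0 : x = 0
    · subst hx0
      exact (H.differentiableAt hnh).differentiableWithinAt
    · have hmem : x ∈ Metric.ball (0:ℂ) 1 \ {0} := ⟨hx, by simp [hx0]⟩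
      have hfd : DifferentiableAt ℂ f x := hf.differentiableAt (hSopen.mem_nhds hmem)
      have hevq : Function.update f 0 (limUnder (nhdsWithin 0 {(0:ℂ)}ᶜ) f) =ᶠ[nhds x] f := by
        filter_upwards [isOpen_compl_singleton.eventually_mem (by simp [hx0] :
          x ∈ ({(0:ℂ)}ᶜ : Set ℂ))] with y hy
        exact Function.update_of_ne hy _ f
      exact (hevq.differentiableAt_iff.2 hfd).differentiableWithinAt
  · intro x hx
    have hx0 : x ≠ 0 := fun hcon => hx.2 (by simp [hcon])
    exact Function.update_of_ne hx0 _ f
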